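/- Tsallis-entropy-regularized optimization (ent-max lemma): let 0 ≤ q < 1, λ > 0, and let Q : ℝ^m → ℝ be measurable. Suppose C ∈ ℝ is such that φ*(u) := exp_q(-(1/λ)Q(u) + C) satisfies ∫ φ*(u) du = 1 and ∫ |Q(u)| φ*(u) du < ∞. Then for every probability density φ on ℝ^m with ∫ |Q| φ < ∞ and finite deformed q-entropy, J(φ) := ∫ Q(u) φ(u) du - λ H_q(φ) ≥ J(φ*), with equality if and only if φ = φ* almost everywhere. -/

import Mathlib

open Real MeasureTheory

/-- The `q`-exponential: `exp_q(x) = [1 + (1-q)x]_+ ^ (1/(1-q))`. -/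
noncomputable def qexp (q x : ℝ) : ℝ := (max (1 + (1 - q) * x) 0) ^ (1 / (1 - q))

/-- The `q`-logarithm: `log_q(x) = (x^(1-q) - 1)/(1-q)` (for `x > 0`). -/
noncomputable def qlog (q x : ℝ) : ℝ := (x ^ (1 - q) - 1) / (1 - q)

/-- The deformed `q`-entropy of a density `φ` on `ℝᵐ`:
`H_q(φ) = -(1/(2-q))(∫ φ log_q φ - 1)`. -/
noncomputable def deformedEntropy {m : ℕ} (q : ℝ) (φ : (Fin m → ℝ) → ℝ) : ℝ :=
  -(1 / (2 - q)) * ((∫ u : Fin m → ℝ, φ u * qlog q (φ u)) - 1)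

/-- The Tsallis-entropy-regularized objective `J(φ) = ∫ Q φ - λ H_q(φ)`. -/
noncomputable def Jreg {m : ℕ} (q lam : ℝ) (Q φ : (Fin m → ℝ) → ℝ) : ℝ :=
  (∫ u : Fin m → ℝ, Q u * φ u) - lam * deformedEntropy q φ

/-! Write `p = 2 - q > 1` and `s(u) = 1 + (1 - q)(-Q(u)/λ + C)`. Since `∫ φ = 1`,
`J(φ) - λC` is the integral of `λ/(p - 1) · (φ^p/p - s φ)`, and by the tangent-line inequality
for the strictly convex `a ↦ a^p` the function `a ↦ a^p/p - s a` has the unique minimiser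
`[s]_+^{1/(p-1)} = exp_q(-Q/λ + C)` on `[0, ∞)`. So the integrand of `J(φ)` dominates that of
`J(φ*)` pointwise, and equality of the integrals forces equality of the integrands a.e. -/

lemma rpow_add_mul_rpow_sub_one_mul_sub_lt {p a b : ℝ} (hp : 1 < p) (ha : 0 ≤ a) (hb : 0 < b)
    (hab : a ≠ b) : b ^ p + p * b ^ (p - 1) * (a - b) < a ^ p := by
  have hbern : 1 + p * (a / b - 1) < (1 + (a / b - 1)) ^ p := by
    refine one_add_mul_self_lt_rpow_one_add ?_ ?_ hp
    · linarith [div_nonneg ha hb.le]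
    · rwa [sub_ne_zero, ne_eq, div_eq_one_iff_eq hb.ne']
  rw [add_sub_cancel, div_rpow ha hb.le, lt_div_iff₀ (rpow_pos_of_pos hb p)] at hbern
  calc b ^ p + p * b ^ (p - 1) * (a - b) = (1 + p * (a / b - 1)) * b ^ p := by
        rw [rpow_sub_one hb.ne']; field_simp
    _ < a ^ p := hbern

lemma rpow_div_sub_mul_lt_of_ne {p s a : ℝ} (hp : 1 < p) (ha : 0 ≤ a)
    (hne : a ≠ max s 0 ^ (p - 1)⁻¹) :
    (max s 0 ^ (p - 1)⁻¹) ^ p / p - s * max s 0 ^ (p - 1)⁻¹ < a ^ p / p - s * a := by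
  have hp0 : 0 < p := by linarith
  have hp1 : (p - 1)⁻¹ ≠ 0 := inv_ne_zero (by linarith)
  rcases le_or_gt s 0 with hs | hs
  · rw [max_eq_right hs, zero_rpow hp1] at hne ⊢
    have hapos : 0 < a ^ p := rpow_pos_of_pos (lt_of_le_of_ne ha (Ne.symm hne)) p
    rw [zero_rpow hp0.ne', zero_div, mul_zero, sub_zero]
    nlinarith [div_pos hapos hp0]
  · set b := s ^ (p - 1)⁻¹ with hb
    rw [max_eq_left hs.le] at hne ⊢
    have hbpos : 0 < b := rpow_pos_of_pos hs _
    have hbs : b ^ (p - 1) = s := by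
      rw [hb, ← rpow_mul hs.le, inv_mul_cancel₀ (by linarith), rpow_one]
    have htan := rpow_add_mul_rpow_sub_one_mul_sub_lt hp ha hbpos hne
    rw [hbs] at htan
    rw [div_sub' hp0.ne', div_sub' hp0.ne', div_lt_div_iff_of_pos_right hp0]
    linarith

lemma qexp_eq_max_rpow (q y : ℝ) : qexp q y = max (1 + (1 - q) * y) 0 ^ (2 - q - 1)⁻¹ := by
  rw [qexp, one_div, show 2 - q - 1 = 1 - q by ring]

lemma qexp_nonneg (q y : ℝ) : 0 ≤ qexp q y :=
  rpow_nonneg (le_max_right _ _) _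

lemma qexp_mul_qlog_qexp {q : ℝ} (hq : q < 1) (y : ℝ) :
    qexp q y * qlog q (qexp q y) = y * qexp q y := by
  have h1q : 1 - q ≠ 0 := by linarith
  rcases lt_or_ge 0 (1 + (1 - q) * y) with hx | hx
  · have hpow : qexp q y ^ (1 - q) = 1 + (1 - q) * y := by
      rw [qexp, max_eq_left hx.le, ← rpow_mul hx.le, one_div, inv_mul_cancel₀ h1q, rpow_one]
    rw [qlog, hpow]
    field_simp
    ring
  · rw [qexp, max_eq_right hx, zero_rpow (one_div_ne_zero h1q), zero_mul, mul_zero]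

lemma mul_qlog_eq {q a : ℝ} (hq : q < 1) (ha : 0 ≤ a) :
    a * qlog q a = (a ^ (2 - q) - a) / (1 - q) := by
  rw [qlog, show 2 - q = (1 - q) + 1 by ring, rpow_add' ha (by linarith), rpow_one]
  ring

noncomputable def entmaxLagrangian (q lam C Qu a : ℝ) : ℝ :=
  Qu * a + lam / (2 - q) * (a * qlog q a) - (lam * C + lam / (2 - q)) * a

lemma entmaxLagrangian_eq {q lam C Qu a : ℝ} (hq : q < 1) (hlam : lam ≠ 0) (ha : 0 ≤ a) :
    entmaxLagrangian q lam C Qu a =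
      lam / (1 - q) * (a ^ (2 - q) / (2 - q) - (1 + (1 - q) * (-(1 / lam) * Qu + C)) * a) := by
  have h1q : 1 - q ≠ 0 := by linarith
  have h2q : 2 - q ≠ 0 := by linarith
  rw [entmaxLagrangian, mul_qlog_eq hq ha]
  field_simp
  ring

lemma entmaxLagrangian_qexp_lt {q lam C Qu a : ℝ} (hq : q < 1) (hlam : 0 < lam) (ha : 0 ≤ a)
    (hne : a ≠ qexp q (-(1 / lam) * Qu + C)) :
    entmaxLagrangian q lam C Qu (qexp q (-(1 / lam) * Qu + C)) < entmaxLagrangian q lam C Qu a := by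
  rw [entmaxLagrangian_eq hq hlam.ne' ha, entmaxLagrangian_eq hq hlam.ne' (qexp_nonneg _ _)]
  rw [qexp_eq_max_rpow] at hne ⊢
  exact mul_lt_mul_of_pos_left (rpow_div_sub_mul_lt_of_ne (by linarith) ha hne)
    (div_pos hlam (by linarith))

lemma integrable_mul_of_integrable_abs_mul {α : Type*} [MeasurableSpace α] {μ : Measure α}
    {f g : α → ℝ} (hf : Measurable f) (hg : Measurable g) (hg0 : ∀ x, 0 ≤ g x)
    (h : Integrable (fun x => |f x| * g x) μ) : Integrable (fun x => f x * g x) μ := by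
  refine (integrable_norm_iff (hf.mul hg).aestronglyMeasurable).mp ?_
  simpa only [Pi.mul_apply, norm_mul, Real.norm_eq_abs, abs_of_nonneg (hg0 _)] using h

lemma integral_le_and_integral_eq_iff_of_unique_min {α : Type*} [MeasurableSpace α]
    {μ : Measure α} {L : α → ℝ → ℝ} {f g : α → ℝ}
    (hlt : ∀ x, f x ≠ g x → L x (g x) < L x (f x))
    (hf : Integrable (fun x => L x (f x)) μ) (hg : Integrable (fun x => L x (g x)) μ) :
    ∫ x, L x (g x) ∂μ ≤ ∫ x, L x (f x) ∂μ ∧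
      (∫ x, L x (f x) ∂μ = ∫ x, L x (g x) ∂μ ↔ f =ᵐ[μ] g) := by
  have hle : ∀ x, L x (g x) ≤ L x (f x) := fun x => by
    rcases eq_or_ne (f x) (g x) with h | h
    · rw [h]
    · exact (hlt x h).le
  refine ⟨integral_mono hg hf hle, ?_⟩
  rw [eq_comm, integral_eq_iff_of_ae_le hg hf (Filter.Eventually.of_forall hle)]
  constructor
  · intro hL
    filter_upwards [hL] with x hx
    by_contra hne
    exact (hlt x hne).ne hx
  · intro hfg
    filter_upwards [hfg] with x hx
    rw [hx]

section Density

variable {m : ℕ} {q lam C : ℝ} {Q φ : (Fin m → ℝ) → ℝ}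

lemma integrable_entmaxLagrangian (hφ : Integrable φ) (hQφ : Integrable fun u => Q u * φ u)
    (hent : Integrable fun u => φ u * qlog q (φ u)) :
    Integrable fun u => entmaxLagrangian q lam C (Q u) (φ u) :=
  (hQφ.add (hent.const_mul _)).sub (hφ.const_mul _)

lemma Jreg_eq_integral_entmaxLagrangian (hφ : Integrable φ) (hφ1 : ∫ u, φ u = 1)
    (hQφ : Integrable fun u => Q u * φ u) (hent : Integrable fun u => φ u * qlog q (φ u)) :
    Jreg q lam Q φ = (∫ u, entmaxLagrangian q lam C (Q u) (φ u)) + lam * C := by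
  simp only [entmaxLagrangian]
  rw [integral_sub (hQφ.fun_add (hent.const_mul _)) (hφ.const_mul _),
    integral_add hQφ (hent.const_mul _), integral_const_mul, integral_const_mul, hφ1, Jreg,
    deformedEntropy]
  ring

end Density

theorem entmax_minimizer_general {m : ℕ} (q lam : ℝ) (hq1 : q < 1)
    (hlam : 0 < lam) (Q : (Fin m → ℝ) → ℝ) (hQ : Measurable Q) (C : ℝ)
    (hnorm : (∫ u : Fin m → ℝ, qexp q (-(1 / lam) * Q u + C)) = 1)
    (hint : Integrable fun u : Fin m → ℝ => |Q u| * qexp q (-(1 / lam) * Q u + C)) :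
    ∀ φ : (Fin m → ℝ) → ℝ, Measurable φ → (∀ u, 0 ≤ φ u) →
      (∫ u : Fin m → ℝ, φ u) = 1 →
      (Integrable fun u => |Q u| * φ u) →
      (Integrable fun u => φ u * qlog q (φ u)) →
      Jreg q lam Q (fun u => qexp q (-(1 / lam) * Q u + C)) ≤ Jreg q lam Q φ ∧
        (Jreg q lam Q φ = Jreg q lam Q (fun u => qexp q (-(1 / lam) * Q u + C)) ↔
          φ =ᵐ[volume] fun u => qexp q (-(1 / lam) * Q u + C)) := by
  intro φ hφm hφ0 hφ1 hφQ hφent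
  set ψ : (Fin m → ℝ) → ℝ := fun u => qexp q (-(1 / lam) * Q u + C)
  have hψm : Measurable ψ := by simp only [ψ, qexp]; fun_prop
  have hψ : Integrable ψ := .of_integral_ne_zero (by rw [hnorm]; exact one_ne_zero)
  have hφ : Integrable φ := .of_integral_ne_zero (by rw [hφ1]; exact one_ne_zero)
  have hQψ := integrable_mul_of_integrable_abs_mul hQ hψm (fun _ => qexp_nonneg _ _) hint
  have hQφ := integrable_mul_of_integrable_abs_mul hQ hφm hφ0 hφQ
  have hψent : Integrable fun u => ψ u * qlog q (ψ u) := by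
    simp only [ψ, qexp_mul_qlog_qexp hq1, add_mul, mul_assoc]
    exact (hQψ.const_mul _).add (hψ.const_mul _)
  rw [Jreg_eq_integral_entmaxLagrangian (C := C) hφ hφ1 hQφ hφent,
    Jreg_eq_integral_entmaxLagrangian (C := C) hψ hnorm hQψ hψent, add_left_inj,
    add_le_add_iff_right]
  exact integral_le_and_integral_eq_iff_of_unique_min
    (fun u hne => entmaxLagrangian_qexp_lt hq1 hlam (hφ0 u) hne)
    (integrable_entmaxLagrangian hφ hQφ hφent) (integrable_entmaxLagrangian hψ hQψ hψent)

/-- Ent-max lemma: `φ*(u) = exp_q(-(1/λ)Q(u) + C)` minimizes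
`J(φ) = ∫ Q φ - λ H_q(φ)` over probability densities, uniquely up to null sets. -/
theorem entmax_minimizer {m : ℕ} (q lam : ℝ) (hq0 : 0 ≤ q) (hq1 : q < 1)
    (hlam : 0 < lam) (Q : (Fin m → ℝ) → ℝ) (hQ : Measurable Q) (C : ℝ)
    (hnorm : (∫ u : Fin m → ℝ, qexp q (-(1 / lam) * Q u + C)) = 1)
    (hint : Integrable fun u : Fin m → ℝ => |Q u| * qexp q (-(1 / lam) * Q u + C)) :
    ∀ φ : (Fin m → ℝ) → ℝ, Measurable φ → (∀ u, 0 ≤ φ u) →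
      (∫ u : Fin m → ℝ, φ u) = 1 →
      (Integrable fun u => |Q u| * φ u) →
      (Integrable fun u => φ u * qlog q (φ u)) →
      Jreg q lam Q (fun u => qexp q (-(1 / lam) * Q u + C)) ≤ Jreg q lam Q φ ∧
        (Jreg q lam Q φ = Jreg q lam Q (fun u => qexp q (-(1 / lam) * Q u + C)) ↔
          φ =ᵐ[volume] fun u => qexp q (-(1 / lam) * Q u + C)) :=
  entmax_minimizer_general q lam hq1 hlam Q hQ C hnorm hint
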